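/- arXiv:1702.03097 — 4 statements merged into one kernel-verified Lean document; each statement's English description precedes it below -/
import Mathlib

section
/- Let x₀, y₀, φ₀, x₁, y₁, φ₁, v₀, v₁ : ℝ → ℝ be functions such that x₀, y₀, x₁, y₁ are differentiable with x₀'(t) = v₀(t)·cos φ₀(t), y₀'(t) = v₀(t)·sin φ₀(t), x₁'(t) = v₁(t)·cos φ₁(t), y₁'(t) = v₁(t)·sin φ₁(t). Let d, β : ℝ → ℝ be differentiable with d(t) > 0, x₀(t) − x₁(t) = d(t)·cos(φ₁(t) + β(t)) and y₀(t) − y₁(t) = d(t)·sin(φ₁(t) + β(t)) for all t. Then for all t, d'(t) = −v₁(t)·cos β(t) + v₀(t)·cos(γ(t) + β(t)), where γ(t) = φ₁(t) − φ₀(t). -/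
/-!
Since `d ≥ 0`, the polar relations force `d = √((x₀ - x₁)² + (y₀ - y₁)²)`, which is
differentiable wherever it is positive. Its derivative is the projection of the relative velocity
onto the unit vector of bearing `φ₁ + β`, and the projections of the two velocity vectors are
`v₀ cos(φ₁ + β - φ₀)` and `v₁ cos β`.
-/

open Real

lemma eq_sqrt_of_polar {r θ u w : ℝ} (hr : 0 ≤ r) (hu : u = r * cos θ) (hw : w = r * sin θ) :
    r = √(u ^ 2 + w ^ 2) := by
  have hsq : u ^ 2 + w ^ 2 = r ^ 2 := by
    rw [hu, hw]
    linear_combination r ^ 2 * cos_sq_add_sin_sq θ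
  rw [hsq, sqrt_sq hr]

theorem hasDerivAt_radius_of_polar {r θ u w : ℝ → ℝ} {u' w' t : ℝ}
    (hu' : HasDerivAt u u' t) (hw' : HasDerivAt w w' t)
    (hr : ∀ s, 0 ≤ r s) (hrt : 0 < r t)
    (hu : ∀ s, u s = r s * cos (θ s)) (hw : ∀ s, w s = r s * sin (θ s)) :
    HasDerivAt r (u' * cos (θ t) + w' * sin (θ t)) t := by
  have hr_eq : r = fun s => √(u s ^ 2 + w s ^ 2) :=
    funext fun s => eq_sqrt_of_polar (hr s) (hu s) (hw s)
  have hsum : u t ^ 2 + w t ^ 2 ≠ 0 := by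
    rw [← sq_sqrt (add_nonneg (sq_nonneg (u t)) (sq_nonneg (w t))), ← congrFun hr_eq t]
    positivity
  have hsq : HasDerivAt (fun s => u s ^ 2 + w s ^ 2) (2 * u t * u' + 2 * w t * w') t :=
    ((hu'.fun_pow 2).fun_add (hw'.fun_pow 2)).congr_deriv (by norm_num)
  rw [hr_eq]
  convert hsq.sqrt hsum using 1
  rw [← congrFun hr_eq t, hu t, hw t]
  field_simp

theorem distance_error_dynamics_general
    (x₀ y₀ φ₀ x₁ y₁ φ₁ v₀ v₁ d β : ℝ → ℝ)
    (hx₀ : ∀ t, HasDerivAt x₀ (v₀ t * Real.cos (φ₀ t)) t)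
    (hy₀ : ∀ t, HasDerivAt y₀ (v₀ t * Real.sin (φ₀ t)) t)
    (hx₁ : ∀ t, HasDerivAt x₁ (v₁ t * Real.cos (φ₁ t)) t)
    (hy₁ : ∀ t, HasDerivAt y₁ (v₁ t * Real.sin (φ₁ t)) t)
    (hdpos : ∀ t, 0 < d t)
    (hgx : ∀ t, x₀ t - x₁ t = d t * Real.cos (φ₁ t + β t))
    (hgy : ∀ t, y₀ t - y₁ t = d t * Real.sin (φ₁ t + β t)) :
    ∀ t, deriv d t =
      -v₁ t * Real.cos (β t) + v₀ t * Real.cos ((φ₁ t - φ₀ t) + β t) := by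
  intro t
  have hderiv := hasDerivAt_radius_of_polar (θ := fun s => φ₁ s + β s)
    ((hx₀ t).fun_sub (hx₁ t)) ((hy₀ t).fun_sub (hy₁ t)) (fun s => (hdpos s).le) (hdpos t) hgx hgy
  have hcos_β : cos (β t) = cos (φ₁ t + β t - φ₁ t) := by rw [add_sub_cancel_left]
  rw [hderiv.deriv, hcos_β, show φ₁ t - φ₀ t + β t = φ₁ t + β t - φ₀ t by ring, cos_sub, cos_sub]
  ring

/-- distance-error kinematics of two unicycles.
With x₀ − x₁ = d cos(φ₁ + β), y₀ − y₁ = d sin(φ₁ + β) and d > 0, the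
inter-vehicular distance satisfies
d' = −v₁ cos β + v₀ cos(γ + β), where γ = φ₁ − φ₀. -/
theorem distance_error_dynamics
    (x₀ y₀ φ₀ x₁ y₁ φ₁ v₀ v₁ d β : ℝ → ℝ)
    (hx₀ : ∀ t, HasDerivAt x₀ (v₀ t * Real.cos (φ₀ t)) t)
    (hy₀ : ∀ t, HasDerivAt y₀ (v₀ t * Real.sin (φ₀ t)) t)
    (hx₁ : ∀ t, HasDerivAt x₁ (v₁ t * Real.cos (φ₁ t)) t)
    (hy₁ : ∀ t, HasDerivAt y₁ (v₁ t * Real.sin (φ₁ t)) t)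
    (hd : Differentiable ℝ d) (hβ : Differentiable ℝ β)
    (hdpos : ∀ t, 0 < d t)
    (hgx : ∀ t, x₀ t - x₁ t = d t * Real.cos (φ₁ t + β t))
    (hgy : ∀ t, y₀ t - y₁ t = d t * Real.sin (φ₁ t + β t)) :
    ∀ t, deriv d t =
      -v₁ t * Real.cos (β t) + v₀ t * Real.cos ((φ₁ t - φ₀ t) + β t) :=
  distance_error_dynamics_general x₀ y₀ φ₀ x₁ y₁ φ₁ v₀ v₁ d β hx₀ hy₀ hx₁ hy₁ hdpos hgx hgy
end

section
/- Let x₀, y₀, φ₀, x₁, y₁, φ₁, v₀, v₁, ω₁ : ℝ → ℝ be functions such that x₀, y₀, x₁, y₁, φ₁ are differentiable with x₀'(t) = v₀(t)·cos φ₀(t), y₀'(t) = v₀(t)·sin φ₀(t), x₁'(t) = v₁(t)·cos φ₁(t), y₁'(t) = v₁(t)·sin φ₁(t), and φ₁'(t) = ω₁(t). Let d, β : ℝ → ℝ be differentiable with d(t) > 0, x₀(t) − x₁(t) = d(t)·cos(φ₁(t) + β(t)) and y₀(t) − y₁(t) = d(t)·sin(φ₁(t) + β(t)) for all t. Then for all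 t, β'(t) = −ω₁(t) + (v₁(t)/d(t))·sin β(t) − (v₀(t)/d(t))·sin(γ(t) + β(t)), where γ(t) = φ₁(t) − φ₀(t). -/
/-! Write the relative position `(x₀ - x₁, y₀ - y₁)` in polar form with radius `d` and angle
`θ = φ₁ + β`. Projecting its velocity `v₀ (cos φ₀, sin φ₀) - v₁ (cos φ₁, sin φ₁)` onto the unit
normal `(-sin θ, cos θ)` gives `d θ' = v₁ sin (θ - φ₁) - v₀ sin (θ - φ₀)`, and `θ' = ω₁ + β'`. -/

open Filter Real Topology

theorem radius_mul_angle_deriv_of_polar {ρ θ X Y : ℝ → ℝ} {ρ' θ' a b t : ℝ}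
    (hρ : HasDerivAt ρ ρ' t) (hθ : HasDerivAt θ θ' t)
    (hX : HasDerivAt X a t) (hY : HasDerivAt Y b t)
    (hXρ : ∀ᶠ s in 𝓝 t, X s = ρ s * cos (θ s)) (hYρ : ∀ᶠ s in 𝓝 t, Y s = ρ s * sin (θ s)) :
    ρ t * θ' = b * cos (θ t) - a * sin (θ t) := by
  have hXderiv : a = ρ' * cos (θ t) + ρ t * (-sin (θ t) * θ') :=
    hX.unique ((hρ.mul hθ.cos).congr_of_eventuallyEq hXρ)
  have hYderiv : b = ρ' * sin (θ t) + ρ t * (cos (θ t) * θ') :=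
    hY.unique ((hρ.mul hθ.sin).congr_of_eventuallyEq hYρ)
  linear_combination -(ρ t * θ') * sin_sq_add_cos_sq (θ t) - cos (θ t) * hYderiv
    + sin (θ t) * hXderiv

/-- bearing-error kinematics of two unicycles.
With x₀ − x₁ = d cos(φ₁ + β), y₀ − y₁ = d sin(φ₁ + β) and d > 0, the
bearing angle satisfies
β' = −ω₁ + (v₁/d) sin β − (v₀/d) sin(γ + β), where γ = φ₁ − φ₀. -/
theorem bearing_error_dynamics
    (x₀ y₀ φ₀ x₁ y₁ φ₁ v₀ v₁ ω₁ d β : ℝ → ℝ)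
    (hx₀ : ∀ t, HasDerivAt x₀ (v₀ t * Real.cos (φ₀ t)) t)
    (hy₀ : ∀ t, HasDerivAt y₀ (v₀ t * Real.sin (φ₀ t)) t)
    (hx₁ : ∀ t, HasDerivAt x₁ (v₁ t * Real.cos (φ₁ t)) t)
    (hy₁ : ∀ t, HasDerivAt y₁ (v₁ t * Real.sin (φ₁ t)) t)
    (hφ₁ : ∀ t, HasDerivAt φ₁ (ω₁ t) t)
    (hd : Differentiable ℝ d) (hβ : Differentiable ℝ β)
    (hdpos : ∀ t, 0 < d t)
    (hgx : ∀ t, x₀ t - x₁ t = d t * Real.cos (φ₁ t + β t))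
    (hgy : ∀ t, y₀ t - y₁ t = d t * Real.sin (φ₁ t + β t)) :
    ∀ t, deriv β t =
      -ω₁ t + (v₁ t / d t) * Real.sin (β t)
        - (v₀ t / d t) * Real.sin ((φ₁ t - φ₀ t) + β t) := by
  intro t
  have hangle := radius_mul_angle_deriv_of_polar (hd t).hasDerivAt
    ((hφ₁ t).add (hβ t).hasDerivAt) ((hx₀ t).sub (hx₁ t)) ((hy₀ t).sub (hy₁ t))
    (.of_forall hgx) (.of_forall hgy)
  rw [← add_sub_cancel_left (φ₁ t) (β t), show φ₁ t - φ₀ t + (φ₁ t + β t - φ₁ t)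
    = φ₁ t + β t - φ₀ t by ring, sin_sub, sin_sub]
  field_simp [(hdpos t).ne']
  linear_combination hangle
end

section
/- Let V : [0, ∞) → ℝ be differentiable and let c ∈ ℝ. Suppose that for every t ≥ 0, V(t) > c implies V'(t) < 0. Then V(t) ≤ max{V(0), c} for all t ≥ 0. -/
open Set

/-- Comparing `f` with the constants `max (f a) c + ε`: at a first contact `f x = max (f a) c + ε`
we have `f x > c`, so `f' x < 0`, and `f` cannot cross the constant. -/
theorem image_le_max_of_deriv_right_neg_of_lt {f f' : ℝ → ℝ} {a b c : ℝ}
    (hf : ContinuousOn f (Icc a b))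
    (hf' : ∀ x ∈ Ico a b, HasDerivWithinAt f (f' x) (Ici x) x)
    (hdec : ∀ x ∈ Ico a b, c < f x → f' x < 0) :
    ∀ ⦃x⦄, x ∈ Icc a b → f x ≤ max (f a) c := by
  intro x hx
  refine le_of_forall_pos_le_add fun ε hε => ?_
  refine image_le_of_deriv_right_lt_deriv_boundary' (B := fun _ => max (f a) c + ε) (B' := 0)
    hf hf' (by linarith [le_max_left (f a) c]) continuousOn_const
    (fun _ _ => hasDerivWithinAt_const _ _ _) (fun y hy hfy => hdec y hy ?_) hx
  linarith [le_max_right (f a) c]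

/-- ultimate-boundedness comparison principle. If V is
differentiable on [0, ∞) and V(t) > c forces V'(t) < 0, then
V(t) ≤ max{V(0), c} for all t ≥ 0. -/
theorem lyapunov_ultimate_bound
    (V V' : ℝ → ℝ) (c : ℝ)
    (hV : ∀ t, 0 ≤ t → HasDerivWithinAt V (V' t) (Set.Ici (0 : ℝ)) t)
    (hdec : ∀ t, 0 ≤ t → c < V t → V' t < 0) :
    ∀ t, 0 ≤ t → V t ≤ max (V 0) c := fun _ ht =>
  image_le_max_of_deriv_right_neg_of_lt
    (fun x hx => ((hV x hx.1).continuousWithinAt).mono Icc_subset_Ici_self)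
    (fun x hx => (hV x hx.1).mono (Ici_subset_Ici.2 hx.1))
    (fun x hx => hdec x hx.1) ⟨ht, le_rfl⟩
end

section
/- Let a, b, k > 0, let ρ be the performance function ρ(t) = (1 − ρ_∞/max{a,b})e^{−l t} + ρ_∞/max{a,b} with l > 0 and 0 < ρ_∞ < max{a,b}, let 0 < β_con < π/2, let W ≥ 0, and let 0 < T ≤ ∞. Suppose β, w : [0, T) → ℝ satisfy |β(t)| ≤ β_con and |w(t)| ≤ W for all t, and e : [0, T) → ℝ is differentiable with −a·ρ(t) < e(t) < b·ρ(t) for all t ∈ [0, T) and e'(t) = −k·cos(β(t))·ε_{a,b}(e(t)/ρ(t)) + w(t) for all t ∈ [0, T). Then there exist constants ξ̲, ξ̄ with −a < ξ̲ ≤ ξ̄ < b, depending only on a, b, k, l, ρ_∞, β_con, W and e(0) (and in particular not on T), such that ξ̲ ≤ e(t)/ρ(t) ≤ ξ̄ for all t ∈ [0, T). -/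
/-!
Write `ξ = e / ρ`. Where `ξ` sits at a level `B` close to `b`, the transformed error
`ε_{a,b}(B)` is at least `E = (W + b l + 1) / (k cos β_con)`, so the feedback term drives
`e' ≤ -(b l + 1)`, which beats both the disturbance and the shrinking of `ρ`
(`|B ρ'| ≤ b l`); hence `ξ' < 0` whenever `ξ = B`, and `ξ` cannot cross `B`.
Taking `B = max e(0) (b (1 - exp (-E)))` gives the upper bound; the lower bound is the
same argument applied to `-e`, since `ε_{a,b}(-x) = -ε_{b,a}(x)`.
-/

/-- The transformed error ε_{a,b}(x) = log((1 + x/a)/(1 − x/b)). -/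
noncomputable def epsErr (a b x : ℝ) : ℝ := Real.log ((1 + x / a) / (1 - x / b))

/-- The performance function ρ(t) = (1 − ρ_∞/M)e^{−l t} + ρ_∞/M. -/
noncomputable def perfFn (l ρ_inf M t : ℝ) : ℝ :=
  (1 - ρ_inf / M) * Real.exp (-l * t) + ρ_inf / M

open Real Set

theorem epsErr_neg (a b x : ℝ) : epsErr a b (-x) = -epsErr b a x := by
  rw [epsErr, epsErr, ← Real.log_inv, inv_div]
  ring_nf

noncomputable def barrierLevel (b E : ℝ) : ℝ := b * (1 - exp (-E))

theorem barrierLevel_lt {b : ℝ} (hb : 0 < b) (E : ℝ) : barrierLevel b E < b := by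
  have := mul_pos hb (exp_pos (-E))
  rw [barrierLevel]
  linarith

theorem barrierLevel_nonneg {b E : ℝ} (hb : 0 ≤ b) (hE : 0 ≤ E) : 0 ≤ barrierLevel b E :=
  mul_nonneg hb (sub_nonneg.2 (exp_le_one_iff.2 (neg_nonpos.2 hE)))

theorem le_epsErr_of_barrierLevel_le {a b E x : ℝ} (ha : 0 < a) (hb : 0 < b) (hE : 0 ≤ E)
    (hx : barrierLevel b E ≤ x) (hxb : x < b) : E ≤ epsErr a b x := by
  have hx0 : 0 ≤ x := (barrierLevel_nonneg hb.le hE).trans hx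
  have hden : 0 < 1 - x / b := sub_pos.2 ((div_lt_one hb).2 hxb)
  have hden_le : 1 - x / b ≤ exp (-E) := by
    rw [barrierLevel] at hx
    have : 1 - exp (-E) ≤ x / b := (le_div_iff₀ hb).2 (by linarith)
    linarith
  have hnum : 1 ≤ 1 + x / a := le_add_of_nonneg_right (div_nonneg hx0 ha.le)
  rw [epsErr, le_log_iff_exp_le (by positivity), le_div_iff₀ hden]
  calc exp E * (1 - x / b) ≤ exp E * exp (-E) := by gcongr
    _ = 1 := by rw [← exp_add, add_neg_cancel, exp_zero]
    _ ≤ 1 + x / a := hnum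

theorem perfFn_zero (l ρ_inf M : ℝ) : perfFn l ρ_inf M 0 = 1 := by
  simp [perfFn]

theorem hasDerivAt_perfFn (l ρ_inf M t : ℝ) :
    HasDerivAt (perfFn l ρ_inf M) (-l * (perfFn l ρ_inf M t - ρ_inf / M)) t := by
  have h := (((hasDerivAt_id' t).const_mul (-l)).exp.const_mul (1 - ρ_inf / M)).add_const
    (ρ_inf / M)
  refine h.congr_deriv ?_
  rw [perfFn]
  ring

theorem perfFn_pos {l ρ_inf M : ℝ} (h0 : 0 < ρ_inf / M) (h1 : ρ_inf / M ≤ 1) (t : ℝ) :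
    0 < perfFn l ρ_inf M t := by
  have := mul_nonneg (sub_nonneg.2 h1) (exp_pos (-l * t)).le
  rw [perfFn]
  linarith

theorem abs_deriv_perfFn_le {l ρ_inf M t : ℝ} (hl : 0 ≤ l) (ht : 0 ≤ t)
    (h0 : 0 ≤ ρ_inf / M) (h1 : ρ_inf / M ≤ 1) :
    |-l * (perfFn l ρ_inf M t - ρ_inf / M)| ≤ l := by
  have hexp : exp (-l * t) ≤ 1 := exp_le_one_iff.2 (by nlinarith)
  have hdiff : perfFn l ρ_inf M t - ρ_inf / M ∈ Icc 0 1 := by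
    rw [perfFn, add_sub_cancel_right]
    exact ⟨mul_nonneg (sub_nonneg.2 h1) (exp_pos _).le,
      mul_le_one₀ (by linarith) (exp_pos _).le hexp⟩
  rw [abs_mul, abs_neg, abs_of_nonneg hl, abs_of_nonneg hdiff.1]
  exact mul_le_of_le_one_right hl hdiff.2

theorem div_le_of_deriv_lt_at_eq {e e' ρ ρ' : ℝ → ℝ} {t₀ t₁ B : ℝ}
    (he : ∀ x ∈ Icc t₀ t₁, HasDerivWithinAt e (e' x) (Icc t₀ t₁) x)
    (hρ : ∀ x ∈ Icc t₀ t₁, HasDerivWithinAt ρ (ρ' x) (Icc t₀ t₁) x)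
    (hρ_pos : ∀ x ∈ Icc t₀ t₁, 0 < ρ x) (h₀ : e t₀ / ρ t₀ ≤ B)
    (hB : ∀ x ∈ Ico t₀ t₁, e x / ρ x = B → e' x < B * ρ' x) :
    ∀ x ∈ Icc t₀ t₁, e x / ρ x ≤ B := by
  have hdiv : ∀ x ∈ Icc t₀ t₁, HasDerivWithinAt (fun s => e s / ρ s)
      ((e' x * ρ x - e x * ρ' x) / ρ x ^ 2) (Icc t₀ t₁) x :=
    fun x hx => (he x hx).div (hρ x hx) (hρ_pos x hx).ne'
  refine image_le_of_deriv_right_lt_deriv_boundary (B := fun _ => B) (B' := fun _ => 0)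
    (fun x hx => (hdiv x hx).continuousWithinAt)
    (fun x hx => (hdiv x (Ico_subset_Icc_self hx)).mono_of_mem_nhdsWithin
      (Icc_mem_nhdsGE_of_mem hx)) h₀ (fun _ => hasDerivAt_const _ _) ?_
  intro x hx hxB
  have hρx := hρ_pos x (Ico_subset_Icc_self hx)
  have hex : e x = B * ρ x := (div_eq_iff hρx.ne').1 hxB
  have hnum : e' x * ρ x - e x * ρ' x < 0 := by
    rw [hex]
    nlinarith [hB x hx hxB]
  exact div_neg_of_neg_of_pos hnum (by positivity)

theorem div_le_of_closed_loop {a b k c W L t₀ t₁ B : ℝ} {β w e e' ρ ρ' : ℝ → ℝ}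
    (ha : 0 < a) (hb : 0 < b) (hk : 0 < k) (hc : 0 < c) (hW : 0 ≤ W) (hL : 0 ≤ L)
    (hB : barrierLevel b ((W + b * L + 1) / (k * c)) ≤ B) (hBb : B < b)
    (he : ∀ x ∈ Icc t₀ t₁, HasDerivWithinAt e (e' x) (Icc t₀ t₁) x)
    (hρ : ∀ x ∈ Icc t₀ t₁, HasDerivWithinAt ρ (ρ' x) (Icc t₀ t₁) x)
    (hρ_pos : ∀ x ∈ Icc t₀ t₁, 0 < ρ x)
    (hρ' : ∀ x ∈ Icc t₀ t₁, |ρ' x| ≤ L)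
    (hβ : ∀ x ∈ Icc t₀ t₁, c ≤ cos (β x)) (hw : ∀ x ∈ Icc t₀ t₁, w x ≤ W)
    (hode : ∀ x ∈ Icc t₀ t₁, e' x = -k * cos (β x) * epsErr a b (e x / ρ x) + w x)
    (h₀ : e t₀ / ρ t₀ ≤ B) :
    ∀ x ∈ Icc t₀ t₁, e x / ρ x ≤ B := by
  set E := (W + b * L + 1) / (k * c)
  have hE : 0 ≤ E := by positivity
  have hgain : k * c * E = W + b * L + 1 := mul_div_cancel₀ _ (by positivity)
  have hB0 : 0 ≤ B := (barrierLevel_nonneg hb.le hE).trans hB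
  refine div_le_of_deriv_lt_at_eq he hρ hρ_pos h₀ ?_
  intro x hx hxB
  have hx' := Ico_subset_Icc_self hx
  have hcos := hβ x hx'
  have hfeedback : k * c * E ≤ k * cos (β x) * epsErr a b B := by
    rw [mul_assoc, mul_assoc]
    gcongr
    exacts [hc.le.trans hcos, le_epsErr_of_barrierLevel_le ha hb hE hB hBb]
  have hdrift : -(b * L) ≤ B * ρ' x := by
    have : |B * ρ' x| ≤ b * L := by
      rw [abs_mul, abs_of_nonneg hB0]
      exact mul_le_mul hBb.le (hρ' x hx') (abs_nonneg _) hb.le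
    linarith [neg_abs_le (B * ρ' x)]
  rw [hode x hx', hxB]
  linarith [hw x hx']

theorem div_mem_Icc_of_closed_loop {a b k c W L t₀ t₁ Blo Bhi : ℝ} {β w e e' ρ ρ' : ℝ → ℝ}
    (ha : 0 < a) (hb : 0 < b) (hk : 0 < k) (hc : 0 < c) (hW : 0 ≤ W) (hL : 0 ≤ L)
    (hlo : Blo ≤ -barrierLevel a ((W + a * L + 1) / (k * c))) (hloa : -a < Blo)
    (hhi : barrierLevel b ((W + b * L + 1) / (k * c)) ≤ Bhi) (hhib : Bhi < b)
    (he : ∀ x ∈ Icc t₀ t₁, HasDerivWithinAt e (e' x) (Icc t₀ t₁) x)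
    (hρ : ∀ x ∈ Icc t₀ t₁, HasDerivWithinAt ρ (ρ' x) (Icc t₀ t₁) x)
    (hρ_pos : ∀ x ∈ Icc t₀ t₁, 0 < ρ x)
    (hρ' : ∀ x ∈ Icc t₀ t₁, |ρ' x| ≤ L)
    (hβ : ∀ x ∈ Icc t₀ t₁, c ≤ cos (β x)) (hw : ∀ x ∈ Icc t₀ t₁, |w x| ≤ W)
    (hode : ∀ x ∈ Icc t₀ t₁, e' x = -k * cos (β x) * epsErr a b (e x / ρ x) + w x)
    (h₀ : e t₀ / ρ t₀ ∈ Icc Blo Bhi) :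
    ∀ x ∈ Icc t₀ t₁, e x / ρ x ∈ Icc Blo Bhi := by
  have hupper := div_le_of_closed_loop ha hb hk hc hW hL hhi hhib he hρ hρ_pos hρ' hβ
    (fun x hx => (le_abs_self _).trans (hw x hx)) hode h₀.2
  have hlower := div_le_of_closed_loop (a := b) (b := a) (e := fun x => -e x)
    (e' := fun x => -e' x) (w := fun x => -w x) hb ha hk hc hW hL (le_neg.1 hlo) (neg_lt.1 hloa)
    (fun x hx => (he x hx).neg) hρ hρ_pos hρ' hβ (fun x hx => (neg_le_abs _).trans (hw x hx))
    (fun x hx => by rw [hode x hx, neg_div, epsErr_neg]; ring)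
    (by rw [neg_div]; exact neg_le_neg h₀.1)
  intro x hx
  refine ⟨?_, hupper x hx⟩
  have := hlower x hx
  rw [neg_div] at this
  exact le_of_neg_le_neg this

theorem cos_le_cos_of_abs_le {x y : ℝ} (hxy : |x| ≤ y) (hy : y ≤ π) : cos y ≤ cos x :=
  cos_abs x ▸ cos_le_cos_of_nonneg_of_le_pi (abs_nonneg x) hy hxy

/-- the prescribed-performance closed-loop distance-error
subsystem. The normalized error e(t)/ρ(t) stays in a compact subinterval
[ξ̲, ξ̄] ⊂ (−a, b) whose endpoints depend only on a, b, k, l, ρ_∞, β_con, W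
and e(0) — in particular not on T (nor on the particular signals β, w, e). -/
theorem distance_subsystem_uniform_bounds
    (a b k l ρ_inf β_con W e0 : ℝ)
    (ha : 0 < a) (hb : 0 < b) (hk : 0 < k) (hl : 0 < l)
    (hρ0 : 0 < ρ_inf) (hρ1 : ρ_inf < max a b)
    (hβ0 : 0 < β_con) (hβ1 : β_con < Real.pi / 2) (hW : 0 ≤ W) :
    ∃ ξlo ξhi : ℝ, -a < ξlo ∧ ξlo ≤ ξhi ∧ ξhi < b ∧
      ∀ (T : EReal), 0 < T →
      ∀ (β w e e' : ℝ → ℝ), e 0 = e0 →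
        (∀ t : ℝ, 0 ≤ t → (t : EReal) < T → |β t| ≤ β_con) →
        (∀ t : ℝ, 0 ≤ t → (t : EReal) < T → |w t| ≤ W) →
        (∀ t : ℝ, 0 ≤ t → (t : EReal) < T →
          HasDerivWithinAt e (e' t) {s : ℝ | 0 ≤ s ∧ (s : EReal) < T} t) →
        (∀ t : ℝ, 0 ≤ t → (t : EReal) < T →
          -a * perfFn l ρ_inf (max a b) t < e t ∧
            e t < b * perfFn l ρ_inf (max a b) t) →
        (∀ t : ℝ, 0 ≤ t → (t : EReal) < T →
          e' t = -k * Real.cos (β t) *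
              epsErr a b (e t / perfFn l ρ_inf (max a b) t) + w t) →
        ∀ t : ℝ, 0 ≤ t → (t : EReal) < T →
          ξlo ≤ e t / perfFn l ρ_inf (max a b) t ∧
            e t / perfFn l ρ_inf (max a b) t ≤ ξhi := by
  have hr0 : 0 < ρ_inf / max a b := div_pos hρ0 (ha.trans_le (le_max_left a b))
  have hr1 : ρ_inf / max a b ≤ 1 := div_le_one_of_le₀ hρ1.le (ha.le.trans (le_max_left a b))
  have hc : 0 < cos β_con := cos_pos_of_mem_Ioo ⟨by linarith, hβ1⟩
  by_cases he0 : -a < e0 ∧ e0 < b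
  swap
  -- the performance bound at `t = 0` rules out `e0 ∉ (-a, b)`, so any constants do
  · refine ⟨0, 0, neg_lt_zero.2 ha, le_rfl, hb, fun T hT β w e e' he _ _ _ hbnd _ _ _ _ => ?_⟩
    have h0 := hbnd 0 le_rfl (by simpa using hT)
    rw [he, perfFn_zero, mul_one, mul_one] at h0
    exact absurd h0 he0
  have hlo := lt_min he0.1 (neg_lt_neg (barrierLevel_lt ha ((W + a * l + 1) / (k * cos β_con))))
  have hhi := max_lt he0.2 (barrierLevel_lt hb ((W + b * l + 1) / (k * cos β_con)))
  refine ⟨_, _, hlo, (min_le_left _ _).trans (le_max_left _ _), hhi, ?_⟩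
  intro T hT β w e e' he hβ hw hder hbnd hode t ht0 htT
  have hS : ∀ s ∈ Icc 0 t, 0 ≤ s ∧ (s : EReal) < T := fun s hs =>
    ⟨hs.1, (EReal.coe_le_coe_iff.2 hs.2).trans_lt htT⟩
  refine div_mem_Icc_of_closed_loop ha hb hk hc hW hl.le (min_le_right _ _) hlo
    (le_max_right _ _) hhi (fun s hs => (hder s (hS s hs).1 (hS s hs).2).mono hS)
    (fun s _ => (hasDerivAt_perfFn l ρ_inf (max a b) s).hasDerivWithinAt)
    (fun s _ => perfFn_pos hr0 hr1 s)
    (fun s hs => abs_deriv_perfFn_le hl.le hs.1 hr0.le hr1)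
    (fun s hs => cos_le_cos_of_abs_le (hβ s (hS s hs).1 (hS s hs).2) (by linarith [pi_pos]))
    (fun s hs => hw s (hS s hs).1 (hS s hs).2) (fun s hs => hode s (hS s hs).1 (hS s hs).2)
    ?_ t ⟨ht0, le_rfl⟩
  rw [perfFn_zero, div_one, he]
  exact ⟨min_le_left _ _, le_max_left _ _⟩
end
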